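/- arXiv:2112.14451 — 4 statements merged into one kernel-verified Lean document; each statement's English description precedes it below -/
import Mathlib

section
/- Let ξ be a positive integrable random variable whose CDF F_ξ is continuous and strictly increasing on (0,∞). Then for every lower-bounded random variable X with quantile function G_X, one has E[ξ · G_X(1 − F_ξ(ξ))] ≤ E[ξ X] (both sides valued in (−∞, +∞]). -/
open MeasureTheory ProbabilityTheory Set
open scoped ENNReal NNReal Classical

noncomputable section

/-- Quantile function `G_Y(z) = inf {y | F_Y(y) > z}` of `Y` under `μ`. -/
def qf {Ω : Type*} [MeasurableSpace Ω] (μ : Measure Ω) (Y : Ω → ℝ) (z : ℝ) : ℝ :=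
  sInf {y : ℝ | z < (μ {ω | Y ω ≤ y}).toReal}

/-- CDF `F_Y(y) = P(Y ≤ y)` of `Y` under `μ`. -/
def cdfOf {Ω : Type*} [MeasurableSpace Ω] (μ : Measure Ω) (Y : Ω → ℝ) (y : ℝ) : ℝ :=
  (μ {ω | Y ω ≤ y}).toReal

/-- Extended expectation of a real random variable, valued in `EReal`
(in particular it makes sense, with value in `(-∞, +∞]`, when the negative part is
integrable). -/
def expER {Ω : Type*} [MeasurableSpace Ω] (μ : Measure Ω) (f : Ω → ℝ) : EReal :=
  ((∫⁻ ω, ENNReal.ofReal (f ω) ∂μ : ℝ≥0∞) : EReal)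
    - ((∫⁻ ω, ENNReal.ofReal (-f ω) ∂μ : ℝ≥0∞) : EReal)

/-! Shifting `X` by a lower bound `c` (the term `c ξ` is integrable) reduces the claim to
nonnegative variables, where both sides are layer-cake integrals for the weighted measure `ξ dμ`.
The level set `{t < G_X(1 - F_ξ(ξ))}` lies in `{F_ξ(ξ) ≤ μ(t < X)}`, a sublevel set of `ξ`
whose `μ`-mass is at most `μ(t < X)` because `F_ξ(ξ)` is stochastically at least uniform. By the
bathtub principle a sublevel set of `ξ` carries the least `ξ dμ`-mass among all sets of at least
its `μ`-measure, so it weighs no more than `{t < X}`. -/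

section Distribution

variable {Ω : Type*} [MeasurableSpace Ω] {μ : Measure Ω} {Y : Ω → ℝ}

theorem cdfOf_nonneg (y : ℝ) : 0 ≤ cdfOf μ Y y := ENNReal.toReal_nonneg

theorem cdfOf_le_one [IsProbabilityMeasure μ] (y : ℝ) : cdfOf μ Y y ≤ 1 := measureReal_le_one

theorem monotone_cdfOf [IsFiniteMeasure μ] : Monotone (cdfOf μ Y) :=
  fun _ _ h => measureReal_mono fun _ (hω : _ ≤ _) => hω.trans h

theorem cdfOf_eq_cdf_map [IsProbabilityMeasure μ] (hY : Measurable Y) :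
    cdfOf μ Y = cdf (μ.map Y) := by
  have := Measure.isProbabilityMeasure_map (μ := μ) hY.aemeasurable
  ext y
  rw [cdf_eq_real, measureReal_def, Measure.map_apply hY measurableSet_Iic]
  rfl

theorem exists_lt_cdfOf [IsProbabilityMeasure μ] (hY : Measurable Y) {z : ℝ} (hz : z < 1) :
    ∃ y, z < cdfOf μ Y y := by
  rw [cdfOf_eq_cdf_map hY]
  exact ((tendsto_cdf_atTop _).eventually (lt_mem_nhds hz)).exists

theorem ofReal_one_sub_cdfOf [IsProbabilityMeasure μ] (hY : Measurable Y) (y : ℝ) :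
    ENNReal.ofReal (1 - cdfOf μ Y y) = μ {ω | y < Y ω} := by
  have hcompl : {ω | y < Y ω} = {ω | Y ω ≤ y}ᶜ := by
    ext ω
    simp
  rw [hcompl, prob_compl_eq_one_sub (μ := μ) (s := {ω | Y ω ≤ y}) (hY measurableSet_Iic), cdfOf,
    ENNReal.ofReal_sub _ ENNReal.toReal_nonneg, ENNReal.ofReal_one,
    ENNReal.ofReal_toReal (measure_ne_top _ _)]

/-- Continuity of `F` makes `{F ≤ p}` a closed half-line `(-∞, s]`, of mass `F s ≤ p`. -/
theorem measure_cdfOf_comp_le [IsProbabilityMeasure μ] (hY : Measurable Y)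
    (hF : Continuous (cdfOf μ Y)) (p : ℝ) :
    μ {ω | cdfOf μ Y (Y ω) ≤ p} ≤ ENNReal.ofReal p := by
  rcases le_or_gt 1 p with hp | hp
  · exact prob_le_one.trans (ENNReal.one_le_ofReal.2 hp)
  set S := {y | cdfOf μ Y y ≤ p}
  change μ (Y ⁻¹' S) ≤ _
  rcases S.eq_empty_or_nonempty with hS | hS
  · simp [hS]
  obtain ⟨y₀, hy₀⟩ := exists_lt_cdfOf (μ := μ) hY hp
  have hbdd : BddAbove S := ⟨y₀, fun y hy => (monotone_cdfOf.reflect_lt (hy.trans_lt hy₀)).le⟩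
  have hsup : sSup S ∈ S := (isClosed_le hF continuous_const).csSup_mem hS hbdd
  calc μ (Y ⁻¹' S) ≤ μ {ω | Y ω ≤ sSup S} := measure_mono fun ω hω => le_csSup hbdd hω
    _ = ENNReal.ofReal (cdfOf μ Y (sSup S)) := (ENNReal.ofReal_toReal (measure_ne_top _ _)).symm
    _ ≤ ENNReal.ofReal p := ENNReal.ofReal_le_ofReal hsup

end Distribution

section Quantile

variable {Ω : Type*} [MeasurableSpace Ω] {μ : Measure Ω} {Y : Ω → ℝ} {c z : ℝ}

theorem mem_lowerBounds_setOf_lt_cdfOf (hc : ∀ ω, c ≤ Y ω) (hz : 0 ≤ z) :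
    c ∈ lowerBounds {y | z < cdfOf μ Y y} := by
  intro y hy
  have hne : μ {ω | Y ω ≤ y} ≠ 0 := fun h0 => by
    simp only [mem_ofPred_eq, cdfOf, h0, ENNReal.toReal_zero] at hy
    linarith
  obtain ⟨ω, hω⟩ := nonempty_of_measure_ne_zero hne
  exact (hc ω).trans hω

theorem cdfOf_le_of_lt_qf (hc : ∀ ω, c ≤ Y ω) (hz : 0 ≤ z) {t : ℝ} (ht : t < qf μ Y z) :
    cdfOf μ Y t ≤ z :=
  not_lt.1 fun h => (csInf_le ⟨c, mem_lowerBounds_setOf_lt_cdfOf hc hz⟩ h).not_gt ht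

variable [IsProbabilityMeasure μ]

theorem le_qf (hY : Measurable Y) (hc : ∀ ω, c ≤ Y ω) (hz : z ∈ Ico 0 1) : c ≤ qf μ Y z :=
  le_csInf (exists_lt_cdfOf hY hz.2) (mem_lowerBounds_setOf_lt_cdfOf hc hz.1)

theorem monotoneOn_qf (hY : Measurable Y) (hc : ∀ ω, c ≤ Y ω) :
    MonotoneOn (qf μ Y) (Ico 0 1) := fun _ hz₁ _ hz₂ h =>
  csInf_le_csInf ⟨c, mem_lowerBounds_setOf_lt_cdfOf hc hz₁.1⟩ (exists_lt_cdfOf hY hz₂.2)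
    fun _ hy => h.trans_lt hy

theorem measurable_qf_comp (hY : Measurable Y) (hc : ∀ ω, c ≤ Y ω) {Z : Ω → ℝ}
    (hZ : Measurable Z) (hZmem : ∀ ω, Z ω ∈ Ico 0 1) : Measurable fun ω => qf μ Y (Z ω) := by
  have hmono : Monotone fun z : Ico (0 : ℝ) 1 => qf μ Y z :=
    fun a b h => monotoneOn_qf hY hc a.2 b.2 h
  exact hmono.measurable.comp (hZ.subtype_mk (h := hZmem))

end Quantile

section Rearrangement

variable {Ω : Type*} [MeasurableSpace Ω] {μ : Measure Ω}

/-- Bathtub principle: `⨆ ω ∈ D, f ω` separates the values of `f` on `D \ A` from those on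
`A \ D`. -/
theorem setLIntegral_le_of_measure_le_of_forall_le {f : Ω → ℝ≥0∞} {D A : Set Ω}
    (hD : MeasurableSet D) (hA : MeasurableSet A) (hDfin : μ D ≠ ∞) (hDA : μ D ≤ μ A)
    (hf : ∀ ω ∈ D, ∀ ω' ∉ D, f ω ≤ f ω') :
    ∫⁻ ω in D, f ω ∂μ ≤ ∫⁻ ω in A, f ω ∂μ := by
  set s := ⨆ ω ∈ D, f ω
  have hlow : ∀ ω ∈ D \ A, f ω ≤ s := fun ω hω => le_iSup₂ (f := fun ω _ => f ω) ω hω.1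
  have hhigh : ∀ ω ∈ A \ D, s ≤ f ω := fun ω hω => iSup₂_le fun ω' hω' => hf ω' hω' ω hω.2
  have hmeas : μ (D \ A) ≤ μ (A \ D) := by
    refine (ENNReal.add_le_add_iff_left
      (ne_top_of_le_ne_top hDfin (measure_mono (inter_subset_left (t := A))))).1 ?_
    calc μ (D ∩ A) + μ (D \ A) = μ D := measure_inter_add_sdiff D hA
      _ ≤ μ A := hDA
      _ = μ (D ∩ A) + μ (A \ D) := by rw [inter_comm, measure_inter_add_sdiff A hD]
  calc ∫⁻ ω in D, f ω ∂μ
      = (∫⁻ ω in D ∩ A, f ω ∂μ) + ∫⁻ ω in D \ A, f ω ∂μ := (lintegral_inter_add_sdiff _ _ hA).symm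
    _ ≤ (∫⁻ ω in D ∩ A, f ω ∂μ) + s * μ (D \ A) := by
        gcongr
        exact (setLIntegral_mono' (hD.diff hA) hlow).trans_eq (setLIntegral_const _ _)
    _ ≤ (∫⁻ ω in D ∩ A, f ω ∂μ) + s * μ (A \ D) := by gcongr
    _ ≤ (∫⁻ ω in A ∩ D, f ω ∂μ) + ∫⁻ ω in A \ D, f ω ∂μ := by
        rw [inter_comm]
        gcongr
        exact (setLIntegral_const _ _).symm.trans_le (setLIntegral_mono' (hA.diff hD) hhigh)
    _ = ∫⁻ ω in A, f ω ∂μ := lintegral_inter_add_sdiff _ _ hD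

theorem lintegral_ofReal_le_of_forall_measure_lt_le {f g : Ω → ℝ} (hf₀ : 0 ≤ f) (hg₀ : 0 ≤ g)
    (hf : AEMeasurable f μ) (hg : AEMeasurable g μ)
    (h : ∀ t, μ {ω | t < f ω} ≤ μ {ω | t < g ω}) :
    ∫⁻ ω, ENNReal.ofReal (f ω) ∂μ ≤ ∫⁻ ω, ENNReal.ofReal (g ω) ∂μ := by
  rw [lintegral_eq_lintegral_meas_lt μ (ae_of_all _ hf₀) hf,
    lintegral_eq_lintegral_meas_lt μ (ae_of_all _ hg₀) hg]
  exact lintegral_mono fun t => h t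

variable [IsProbabilityMeasure μ] {ξ X : Ω → ℝ} {c : ℝ}

theorem withDensity_setOf_lt_qf_le (hξ : Measurable ξ) (hF : Continuous (cdfOf μ ξ))
    (hX : Measurable X) (hc : ∀ ω, c ≤ X ω) (t : ℝ) :
    μ.withDensity (fun ω => ENNReal.ofReal (ξ ω)) {ω | t < qf μ X (1 - cdfOf μ ξ (ξ ω))}
      ≤ μ.withDensity (fun ω => ENNReal.ofReal (ξ ω)) {ω | t < X ω} := by
  set p := 1 - cdfOf μ X t
  set D := {ω | cdfOf μ ξ (ξ ω) ≤ p}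
  have hD : MeasurableSet D := measurableSet_le (hF.measurable.comp hξ) measurable_const
  have hA : MeasurableSet {ω | t < X ω} := hX measurableSet_Ioi
  have hsub : {ω | t < qf μ X (1 - cdfOf μ ξ (ξ ω))} ⊆ D := fun ω hω => by
    have := cdfOf_le_of_lt_qf hc (sub_nonneg.2 (cdfOf_le_one _)) hω
    change _ ≤ p
    linarith
  have hsep : ∀ ω ∈ D, ∀ ω' ∉ D, ENNReal.ofReal (ξ ω) ≤ ENNReal.ofReal (ξ ω') :=
    fun ω hω ω' hω' => ENNReal.ofReal_le_ofReal
      (monotone_cdfOf.reflect_lt ((show _ ≤ p from hω).trans_lt (not_le.1 hω'))).le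
  calc _ ≤ μ.withDensity (fun ω => ENNReal.ofReal (ξ ω)) D := measure_mono hsub
    _ = ∫⁻ ω in D, ENNReal.ofReal (ξ ω) ∂μ := withDensity_apply _ hD
    _ ≤ ∫⁻ ω in {ω | t < X ω}, ENNReal.ofReal (ξ ω) ∂μ :=
        setLIntegral_le_of_measure_le_of_forall_le hD hA (measure_ne_top _ _)
          ((measure_cdfOf_comp_le hξ hF p).trans_eq (ofReal_one_sub_cdfOf hX t)) hsep
    _ = _ := (withDensity_apply _ hA).symm

theorem lintegral_mul_qf_sub_le (hξ : Measurable ξ) (hξ₀ : ∀ ω, 0 ≤ ξ ω)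
    (hF : Continuous (cdfOf μ ξ)) (hz : ∀ ω, 1 - cdfOf μ ξ (ξ ω) ∈ Ico 0 1)
    (hX : Measurable X) (hc : ∀ ω, c ≤ X ω) :
    ∫⁻ ω, ENNReal.ofReal (ξ ω * (qf μ X (1 - cdfOf μ ξ (ξ ω)) - c)) ∂μ
      ≤ ∫⁻ ω, ENNReal.ofReal (ξ ω * (X ω - c)) ∂μ := by
  have hY : Measurable fun ω => qf μ X (1 - cdfOf μ ξ (ξ ω)) :=
    measurable_qf_comp hX hc (measurable_const.sub (hF.measurable.comp hξ)) hz
  have hweight : ∀ h : Ω → ℝ, Measurable h → ∫⁻ ω, ENNReal.ofReal (ξ ω * h ω) ∂μ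
      = ∫⁻ ω, ENNReal.ofReal (h ω) ∂μ.withDensity (fun ω => ENNReal.ofReal (ξ ω)) := by
    intro h hh
    rw [lintegral_withDensity_eq_lintegral_mul _ hξ.ennreal_ofReal hh.ennreal_ofReal]
    simp only [Pi.mul_apply, ENNReal.ofReal_mul (hξ₀ _)]
  rw [hweight _ (hY.sub_const c), hweight _ (hX.sub_const c)]
  refine lintegral_ofReal_le_of_forall_measure_lt_le (fun ω => sub_nonneg.2 (le_qf hX hc (hz ω)))
    (fun ω => sub_nonneg.2 (hc ω)) (hY.sub_const c).aemeasurable (hX.sub_const c).aemeasurable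
    fun t => ?_
  simp only [lt_sub_iff_add_lt]
  exact withDensity_setOf_lt_qf_le hξ hF hX hc (t + c)

end Rearrangement

theorem ENNReal.ofReal_add_add_ofReal_neg {a : ℝ} (ha : 0 ≤ a) (b : ℝ) :
    ENNReal.ofReal (a + b) + ENNReal.ofReal (-b)
      = ENNReal.ofReal a + ENNReal.ofReal b + ENNReal.ofReal (-(a + b)) := by
  rcases le_total 0 b with hb | hb
  · rw [ENNReal.ofReal_of_nonpos (neg_nonpos.2 hb),
      ENNReal.ofReal_of_nonpos (by linarith : -(a + b) ≤ 0), ENNReal.ofReal_add ha hb]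
  rcases le_total 0 (a + b) with hab | hab
  · rw [ENNReal.ofReal_of_nonpos hb, ENNReal.ofReal_of_nonpos (neg_nonpos.2 hab),
      ← ENNReal.ofReal_add hab (neg_nonneg.2 hb)]
    simp
  · rw [ENNReal.ofReal_of_nonpos hb, ENNReal.ofReal_of_nonpos hab, zero_add, add_zero,
      ← ENNReal.ofReal_add ha (neg_nonneg.2 hab)]
    ring_nf

theorem EReal.coe_ennreal_sub_eq_of_add_eq {P N F Gp Gn : ℝ≥0∞} (hN : N ≠ ∞) (hGp : Gp ≠ ∞)
    (hGn : Gn ≠ ∞) (h : P + Gn = F + Gp + N) :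
    (P : EReal) - N = F + ((Gp.toReal - Gn.toReal : ℝ) : EReal) := by
  rcases eq_or_ne F ∞ with rfl | hF
  · have hP : P = ∞ := by
      rw [top_add, top_add] at h
      exact (ENNReal.add_eq_top.1 h).resolve_right hGn
    rw [hP, ← EReal.coe_ennreal_toReal hN, EReal.coe_ennreal_top, EReal.top_sub_coe,
      EReal.top_add_coe]
  have hFGp : F + Gp ≠ ∞ := ENNReal.add_ne_top.2 ⟨hF, hGp⟩
  have hP : P ≠ ∞ := fun hP => by
    rw [hP, top_add] at h
    exact ENNReal.add_ne_top.2 ⟨hFGp, hN⟩ h.symm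
  have hreal := congrArg ENNReal.toReal h
  rw [ENNReal.toReal_add hP hGn, ENNReal.toReal_add hFGp hN, ENNReal.toReal_add hF hGp] at hreal
  rw [← EReal.coe_ennreal_toReal hP, ← EReal.coe_ennreal_toReal hN, ← EReal.coe_ennreal_toReal hF,
    ← EReal.coe_sub, ← EReal.coe_add, EReal.coe_eq_coe_iff]
  linarith

theorem expER_add_of_integrable {Ω : Type*} [MeasurableSpace Ω] {μ : Measure Ω} {f g : Ω → ℝ}
    (hf₀ : ∀ ω, 0 ≤ f ω) (hf : AEMeasurable f μ) (hg : Integrable g μ) :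
    expER μ (fun ω => f ω + g ω)
      = (∫⁻ ω, ENNReal.ofReal (f ω) ∂μ : EReal) + ((∫ ω, g ω ∂μ : ℝ) : EReal) := by
  have hgm := hg.aemeasurable
  have hGn : ∫⁻ ω, ENNReal.ofReal (-g ω) ∂μ ≠ ∞ :=
    ne_top_of_le_ne_top hg.neg.2.ne (lintegral_mono fun ω => Real.ofReal_le_enorm (-g ω))
  rw [expER, integral_eq_lintegral_pos_part_sub_lintegral_neg_part hg]
  refine EReal.coe_ennreal_sub_eq_of_add_eq
    (ne_top_of_le_ne_top hGn
      (lintegral_mono fun ω => ENNReal.ofReal_le_ofReal (by linarith [hf₀ ω])))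
    (ne_top_of_le_ne_top hg.2.ne (lintegral_mono fun ω => Real.ofReal_le_enorm (g ω))) hGn ?_
  rw [← lintegral_add_right' _ (g := fun ω => ENNReal.ofReal (-g ω)) hgm.neg.ennreal_ofReal,
    ← lintegral_add_right' _ hgm.ennreal_ofReal,
    ← lintegral_add_right' _ (g := fun ω => ENNReal.ofReal (-(f ω + g ω)))
      (hf.add hgm).neg.ennreal_ofReal]
  exact lintegral_congr fun ω => ENNReal.ofReal_add_add_ofReal_neg (hf₀ ω) (g ω)

/-- `E[ξ · G_X(1 − F_ξ(ξ))] ≤ E[ξ X]` for every lower-bounded random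
variable `X`. -/
theorem quantile_rearrangement_le
    {Ω : Type*} [MeasurableSpace Ω] (μ : Measure Ω) [IsProbabilityMeasure μ]
    (ξ : Ω → ℝ) (hξm : Measurable ξ) (hξpos : ∀ ω, 0 < ξ ω) (hξint : Integrable ξ μ)
    (hFcont : Continuous (cdfOf μ ξ)) (hFmono : StrictMonoOn (cdfOf μ ξ) (Set.Ioi 0))
    (X : Ω → ℝ) (hXm : Measurable X) (hXlb : ∃ c : ℝ, ∀ ω, c ≤ X ω) :
    expER μ (fun ω => ξ ω * qf μ X (1 - cdfOf μ ξ (ξ ω)))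
      ≤ expER μ (fun ω => ξ ω * X ω) := by
  obtain ⟨c, hc⟩ := hXlb
  have hFpos : ∀ ω, 0 < cdfOf μ ξ (ξ ω) := fun ω => (cdfOf_nonneg _).trans_lt
    (hFmono (half_pos (hξpos ω)) (hξpos ω) (half_lt_self (hξpos ω)))
  have hz : ∀ ω, 1 - cdfOf μ ξ (ξ ω) ∈ Ico 0 1 := fun ω =>
    ⟨sub_nonneg.2 (cdfOf_le_one _), sub_lt_self _ (hFpos ω)⟩
  have hY : Measurable fun ω => qf μ X (1 - cdfOf μ ξ (ξ ω)) :=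
    measurable_qf_comp hXm hc (measurable_const.sub (hFcont.measurable.comp hξm)) hz
  have hshift : ∀ Z : Ω → ℝ, Measurable Z → (∀ ω, c ≤ Z ω) → expER μ (fun ω => ξ ω * Z ω)
      = (∫⁻ ω, ENNReal.ofReal (ξ ω * (Z ω - c)) ∂μ : EReal) + ((∫ ω, c * ξ ω ∂μ : ℝ) : EReal) := by
    intro Z hZ hcZ
    rw [← expER_add_of_integrable (fun ω => mul_nonneg (hξpos ω).le (sub_nonneg.2 (hcZ ω)))
      (hξm.mul (hZ.sub_const c)).aemeasurable (hξint.const_mul c)]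
    congr 1
    ext ω
    ring
  calc _ = (∫⁻ ω, ENNReal.ofReal (ξ ω * (qf μ X (1 - cdfOf μ ξ (ξ ω)) - c)) ∂μ : EReal)
          + ((∫ ω, c * ξ ω ∂μ : ℝ) : EReal) :=
        hshift _ hY fun ω => le_qf hXm hc (hz ω)
    _ ≤ (∫⁻ ω, ENNReal.ofReal (ξ ω * (X ω - c)) ∂μ : EReal) + ((∫ ω, c * ξ ω ∂μ : ℝ) : EReal) := by
        gcongr
        exact EReal.coe_ennreal_le_coe_ennreal_iff.2
          (lintegral_mul_qf_sub_le hξm (fun ω => (hξpos ω).le) hFcont hz hXm hc)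
    _ = _ := (hshift X hXm hc).symm
end
end

section
/- Let λ > 0 and c ∈ (0,1). Let v : [0,1] → [0,1] be continuous and strictly increasing with v(0) = 0 and v(1) = 1, continuously differentiable and strictly convex on (0,1), and with v'(s) → +∞ as s ↑ 1. Define φ(s) = λ v(s)/(1+λ) for 0 ≤ s ≤ c and φ(s) = (1 + λ v(s))/(1+λ) for c < s ≤ 1. Then there exists a unique s* ∈ (c, 1) such that φ'(s*) = (φ(s*) − λ v(c)/(1+λ))/(s* − c); equivalently, λ v'(s*)(s* − c) = 1 + λ(v(s*) − v(c)). -/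
/-!
Writing `g(s) = v'(s)(s - c) - (v(s) - v(c))`, the equation reads `g(s) = 1/λ`. Strict convexity
makes `g` strictly increasing on `[c, 1)`, with `g(c) = 0`, and comparing `v` with its tangent at
`s` past a fixed `m ∈ (c, 1)` gives `g(s) ≥ v'(s)(m - c) - (v(m) - v(c)) → ∞` as `s ↑ 1`. The
intermediate value theorem then yields exactly one solution in `(c, 1)`.
-/

open Set Filter Topology

/-- The height of `f c` above the tangent line to `f` at `s`. -/
noncomputable def tangentGap (f f' : ℝ → ℝ) (c s : ℝ) : ℝ :=
  f' s * (s - c) - (f s - f c)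

section TangentGap

variable {f f' : ℝ → ℝ} {S : Set ℝ} {c : ℝ}

lemma continuousOn_tangentGap (hf : ∀ x ∈ S, HasDerivAt f (f' x) x) (hf' : ContinuousOn f' S) :
    ContinuousOn (tangentGap f f' c) S :=
  have hfc : ContinuousOn f S := fun x hx => (hf x hx).continuousAt.continuousWithinAt
  (hf'.mul (continuousOn_id.sub continuousOn_const)).sub (hfc.sub continuousOn_const)

lemma StrictConvexOn.strictMonoOn_tangentGap (hconv : StrictConvexOn ℝ S f)
    (hf : ∀ x ∈ S, HasDerivAt f (f' x) x) : StrictMonoOn (tangentGap f f' c) (S ∩ Ici c) := by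
  rintro x ⟨hx, hcx⟩ y ⟨hy, -⟩ hxy
  have hlt : f' x < slope f x y := hconv.lt_slope_of_hasDerivAt hx hy hxy (hf x hx)
  have hgt : slope f x y < f' y := hconv.slope_lt_of_hasDerivAt hx hy hxy (hf y hy)
  have hderiv : f' x * (x - c) ≤ f' y * (x - c) :=
    mul_le_mul_of_nonneg_right (hlt.trans hgt).le (sub_nonneg.2 hcx)
  rw [slope_def_field, div_lt_iff₀ (sub_pos.2 hxy)] at hgt
  unfold tangentGap
  linarith

lemma ConvexOn.tendsto_tangentGap {a b m : ℝ} (hconv : ConvexOn ℝ (Ioo a b) f)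
    (hf : ∀ x ∈ Ioo a b, HasDerivAt f (f' x) x) (hm : m ∈ Ioo a b) (hcm : c < m)
    (hlim : Tendsto f' (𝓝[<] b) atTop) : Tendsto (tangentGap f f' c) (𝓝[<] b) atTop := by
  have hbound : ∀ᶠ s in 𝓝[<] b, f' s * (m - c) - (f m - f c) ≤ tangentGap f f' c s := by
    filter_upwards [Ioo_mem_nhdsLT hm.2] with s hs
    have hs' : s ∈ Ioo a b := ⟨hm.1.trans hs.1, hs.2⟩
    have hgap := hconv.slope_le_of_hasDerivAt hm hs' hs.1 (hf s hs')
    rw [slope_def_field, div_le_iff₀ (sub_pos.2 hs.1)] at hgap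
    unfold tangentGap
    linarith
  exact tendsto_atTop_mono' _ hbound
    (tendsto_atTop_add_const_right _ _ (hlim.atTop_mul_const (sub_pos.2 hcm)))

end TangentGap

lemma existsUnique_eq_of_tendsto_atTop {g : ℝ → ℝ} {c b y : ℝ} (hcb : c < b)
    (hcont : ContinuousOn g (Ico c b)) (hmono : StrictMonoOn g (Ico c b))
    (hlim : Tendsto g (𝓝[<] b) atTop) (hy : g c < y) : ∃! s, s ∈ Ioo c b ∧ g s = y := by
  obtain ⟨b', hb', hyb'⟩ := ((show ∀ᶠ s in 𝓝[<] b, s ∈ Ioo c b from Ioo_mem_nhdsLT hcb).and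
    (hlim.eventually_gt_atTop y)).exists
  obtain ⟨s, hs, rfl⟩ :=
    intermediate_value_Ioo hb'.1.le (hcont.mono (Icc_subset_Ico_right hb'.2)) ⟨hy, hyb'⟩
  have hs' : s ∈ Ioo c b := ⟨hs.1, hs.2.trans hb'.2⟩
  exact ⟨s, ⟨hs', rfl⟩, fun t ht => hmono.injOn (Ioo_subset_Ico_self ht.1)
    (Ioo_subset_Ico_self hs') ht.2⟩

theorem VaR_tangency_exists_unique_general
    (lam c : ℝ) (hlam : 0 < lam) (hc : c ∈ Set.Ioo (0:ℝ) 1)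
    (v v' : ℝ → ℝ)
    (hdiff : ∀ s ∈ Set.Ioo (0:ℝ) 1, HasDerivAt v (v' s) s)
    (hv'cont : ContinuousOn v' (Set.Ioo 0 1))
    (hconv : StrictConvexOn ℝ (Set.Ioo 0 1) v)
    (hlim : Tendsto v' (nhdsWithin 1 (Set.Iio 1)) atTop) :
    ∃! s : ℝ, s ∈ Set.Ioo c 1 ∧ lam * v' s * (s - c) = 1 + lam * (v s - v c) := by
  have hsub : Ico c 1 ⊆ Ioo 0 1 := fun s hs => ⟨hc.1.trans_le hs.1, hs.2⟩
  have hm : (c + 1) / 2 ∈ Ioo (0 : ℝ) 1 := ⟨by linarith [hc.1], by linarith [hc.2]⟩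
  have key : ∃! s, s ∈ Ioo c 1 ∧ tangentGap v v' c s = lam⁻¹ :=
    existsUnique_eq_of_tendsto_atTop hc.2 ((continuousOn_tangentGap hdiff hv'cont).mono hsub)
      ((hconv.strictMonoOn_tangentGap hdiff).mono fun s hs => ⟨hsub hs, hs.1⟩)
      (hconv.convexOn.tendsto_tangentGap hdiff hm (by linarith [hc.2]) hlim)
      (by simpa [tangentGap] using hlam)
  refine (existsUnique_congr fun s => and_congr_right fun _ => ?_).mp key
  rw [tangentGap, ← mul_right_inj' hlam.ne', mul_inv_cancel₀ hlam.ne']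
  constructor <;> intro h <;> linarith

/-- existence and uniqueness of the tangency point `s* ∈ (c,1)` for the
VaR distorted function `φ(s) = λ v(s)/(1+λ)` on `[0,c]`, `φ(s) = (1 + λ v(s))/(1+λ)` on
`(c,1]`: the unique `s*` with `φ'(s*) = (φ(s*) − λ v(c)/(1+λ))/(s* − c)`, equivalently
`λ v'(s*)(s* − c) = 1 + λ(v(s*) − v(c))`. -/
theorem VaR_tangency_exists_unique
    (lam c : ℝ) (hlam : 0 < lam) (hc : c ∈ Set.Ioo (0:ℝ) 1)
    (v v' : ℝ → ℝ)
    (hvc : ContinuousOn v (Set.Icc 0 1))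
    (hvmono : StrictMonoOn v (Set.Icc 0 1))
    (hv0 : v 0 = 0) (hv1 : v 1 = 1)
    (hvmaps : Set.MapsTo v (Set.Icc 0 1) (Set.Icc 0 1))
    (hdiff : ∀ s ∈ Set.Ioo (0:ℝ) 1, HasDerivAt v (v' s) s)
    (hv'cont : ContinuousOn v' (Set.Ioo 0 1))
    (hconv : StrictConvexOn ℝ (Set.Ioo 0 1) v)
    (hlim : Tendsto v' (nhdsWithin 1 (Set.Iio 1)) atTop) :
    ∃! s : ℝ, s ∈ Set.Ioo c 1 ∧ lam * v' s * (s - c) = 1 + lam * (v s - v c) :=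
  VaR_tangency_exists_unique_general lam c hlam hc v v' hdiff hv'cont hconv hlim
end

section
/- Let λ > 0 and c ∈ (0,1). Let v : [0,1] → [0,1] be continuous and strictly increasing with v(0) = 0 and v(1) = 1, continuously differentiable and strictly convex on (0,1), and with v'(s) → +∞ as s ↑ 1. Define the left-continuous function φ⁻(s) = λ v(s)/(1+λ) for 0 ≤ s ≤ c and φ⁻(s) = (1 + λ v(s))/(1+λ) for c < s ≤ 1, and let s* ∈ (c,1) be the unique point with λ v'(s*)(s* − c) = 1 + λ(v(s*) − v(c)). Then the convex envelope of φ⁻ on [0,1] is δ(s) = φ⁻(s) for 0 ≤ s ≤ c, δ(s) = λ v(c)/(1+λ) + (λ v'(s*)/(1+λ))(s − c) for c < s ≤ s*, and δ(s) = φ⁻(s) for s* < s ≤ 1. -/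
open Set Filter
open scoped Classical

/-- `δ` is the convex envelope of `ψ` on the set `s`: the largest convex function
on `s` that is pointwise dominated by `ψ` on `s`. -/
def IsConvexEnvelopeOn (s : Set ℝ) (ψ δ : ℝ → ℝ) : Prop :=
  ConvexOn ℝ s δ ∧ (∀ t ∈ s, δ t ≤ ψ t) ∧
    ∀ g : ℝ → ℝ, ConvexOn ℝ s g → (∀ t ∈ s, g t ≤ ψ t) → ∀ t ∈ s, g t ≤ δ t

/-!
Off `(c, sstar]` the function `φ⁻` is an affine image of the convex `v`; its only defect is the
upward jump at `c`. By the equation defining `sstar`, the line through `(c, φ⁻(c))` with slope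
`λ v'(sstar) / (1 + λ)` is the tangent at `sstar` to the upper branch `(1 + λ v) / (1 + λ)`.
Convexity of `v` puts this line below the upper branch everywhere and below the lower branch
on `[0, c]`, so it supports δ at both junctions `c` and `sstar`, which makes δ convex. Conversely a
convex minorant of `φ⁻` lies below the line at `c` and at `sstar`, hence on all of `[c, sstar]`.
-/

section
variable {f : ℝ → ℝ} {S : Set ℝ}

theorem convexOn_add_mul_sub (y m c : ℝ) (hS : Convex ℝ S) :
    ConvexOn ℝ S fun x => y + m * (x - c) :=
  (((LinearMap.mul ℝ ℝ m).convexOn hS).add_const (y - m * c)).congr fun x _ => by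
    simp only [Pi.add_apply, LinearMap.mul_apply_apply]
    ring

theorem ConvexOn.add_mul_sub_le_of_hasDerivAt {x y f' : ℝ} (hf : ConvexOn ℝ S f) (hx : x ∈ S)
    (hy : y ∈ S) (hf' : HasDerivAt f f' x) : f x + f' * (y - x) ≤ f y := by
  rcases lt_trichotomy x y with hxy | rfl | hyx
  · have := hf.le_slope_of_hasDerivAt hx hy hxy hf'
    rw [slope_def_field, le_div_iff₀ (sub_pos.2 hxy)] at this
    linarith
  · simp
  · have := hf.slope_le_of_hasDerivAt hy hx hyx hf'
    rw [slope_def_field, div_le_iff₀ (sub_pos.2 hyx)] at this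
    linarith

theorem ConvexOn.add_mul_sub_le_of_le_of_lt {x c t m : ℝ} (hf : ConvexOn ℝ S f) (hx : x ∈ S)
    (ht : t ∈ S) (hxc : x ≤ c) (hct : c < t) (hft : f t ≤ f c + m * (t - c)) :
    f c + m * (x - c) ≤ f x := by
  have hg : ConvexOn ℝ S fun s => f s + -m * s := hf.add ((LinearMap.mul ℝ ℝ (-m)).convexOn hf.1)
  have := hg.le_left_of_right_le'' hx ht hxc hct (by linarith)
  linarith

theorem ConvexOn.le_add_mul_sub_of_mem_Icc {x z s y m c : ℝ} (hf : ConvexOn ℝ S f)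
    (hx : x ∈ S) (hz : z ∈ S) (hs : s ∈ Icc x z)
    (hfx : f x ≤ y + m * (x - c)) (hfz : f z ≤ y + m * (z - c)) :
    f s ≤ y + m * (s - c) := by
  rw [← segment_eq_Icc (hs.1.trans hs.2)] at hs
  obtain ⟨α, β, hα, hβ, hαβ, rfl⟩ := hs
  calc f (α • x + β • z) ≤ α • f x + β • f z := hf.2 hx hz hα hβ hαβ
    _ ≤ α * (y + m * (x - c)) + β * (y + m * (z - c)) := by
      simp only [smul_eq_mul]; gcongr
    _ = y + m * (α • x + β • z - c) := by
      simp only [smul_eq_mul]; linear_combination (y - m * c) * hαβ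

theorem ConvexOn.union_Icc {a b d m : ℝ} (h₁ : ConvexOn ℝ (Icc a b) f)
    (h₂ : ConvexOn ℝ (Icc b d) f) (hm : ∀ x ∈ Icc a d, f b + m * (x - b) ≤ f x) :
    ConvexOn ℝ (Icc a d) f := by
  refine convexOn_of_slope_mono_adjacent (convex_Icc a d) fun {x y z} hx hz hxy hyz => ?_
  have hxz := (hxy.trans hyz).le
  rcases le_or_gt z b with hzb | hbz
  · exact h₁.slope_mono_adjacent ⟨hx.1, hxz.trans hzb⟩ ⟨hx.1.trans hxz, hzb⟩ hxy hyz
  rcases le_or_gt b x with hbx | hxb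
  · exact h₂.slope_mono_adjacent ⟨hbx, hxz.trans hz.2⟩ ⟨hbx.trans hxz, hz.2⟩ hxy hyz
  have hmx := hm x hx
  have hmz := hm z hz
  rcases le_or_gt y b with hyb | hby
  · -- the slope `σ` on `[x, y]` is at most `m`, and `f` grows at rate at least `σ` after `y`
    set σ := (f y - f x) / (y - x)
    have hσ : f y - f x = σ * (y - x) := (div_mul_cancel₀ _ (sub_pos.2 hxy).ne').symm
    have hyb' : σ * (b - y) ≤ f b - f y := by
      rcases hyb.eq_or_lt with rfl | hyb
      · simp
      rw [← le_div_iff₀ (sub_pos.2 hyb)]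
      exact h₁.slope_mono_adjacent ⟨hx.1, hxb.le⟩ ⟨hx.1.trans hxb.le, le_rfl⟩ hxy hyb
    have hσm : σ ≤ m := by nlinarith
    rw [le_div_iff₀ (sub_pos.2 hyz)]
    nlinarith [mul_le_mul_of_nonneg_right hσm (sub_pos.2 hbz).le]
  · set σ := (f z - f y) / (z - y)
    have hσ : f z - f y = σ * (z - y) := (div_mul_cancel₀ _ (sub_pos.2 hyz).ne').symm
    have hby' : f y - f b ≤ σ * (y - b) := by
      rw [← div_le_iff₀ (sub_pos.2 hby)]
      exact h₂.slope_mono_adjacent ⟨le_rfl, hbz.le.trans hz.2⟩ ⟨hbz.le, hz.2⟩ hby hyz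
    have hσm : m ≤ σ := by nlinarith
    rw [div_le_iff₀ (sub_pos.2 hxy)]
    nlinarith [mul_le_mul_of_nonneg_right hσm (sub_pos.2 hxb).le]

end

theorem isConvexEnvelopeOn_Icc_of_tangent_bridge {A C : ℝ → ℝ} {a b c t y m : ℝ}
    (hac : a ≤ c) (hct : c < t) (htb : t ≤ b)
    (hA : ConvexOn ℝ (Icc a c) A) (hC : ConvexOn ℝ (Icc t b) C)
    (hAc : A c = y) (hAℓ : ∀ s ∈ Icc a c, y + m * (s - c) ≤ A s)
    (hCt : C t = y + m * (t - c)) (hCℓ : ∀ s ∈ Icc c b, y + m * (s - c) ≤ C s) :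
    IsConvexEnvelopeOn (Icc a b) (fun s => if s ≤ c then A s else C s)
      (fun s => if s ≤ c then A s else if s ≤ t then y + m * (s - c) else C s) := by
  set δ := fun s => if s ≤ c then A s else if s ≤ t then y + m * (s - c) else C s
  have hδ_bridge : ∀ s ∈ Icc c t, δ s = y + m * (s - c) := by
    rintro s ⟨hcs, hst⟩
    rcases hcs.eq_or_lt with rfl | hcs
    · simp [δ, hAc]
    · simp [δ, hcs.not_ge, hst]
  have hδ_right : ∀ s, t < s → δ s = C s := fun s hts => by
    simp [δ, (hct.trans hts).not_ge, hts.not_ge]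
  have hδ_supp : ∀ s ∈ Icc a b, y + m * (s - c) ≤ δ s := by
    intro s hs
    rcases le_or_gt s c with hsc | hcs
    · simpa [δ, hsc] using hAℓ s ⟨hs.1, hsc⟩
    rcases le_or_gt s t with hst | hts
    · exact (hδ_bridge s ⟨hcs.le, hst⟩).ge
    · exact (hδ_right s hts).symm ▸ hCℓ s ⟨hcs.le, hs.2⟩
  have hδ_le : ∀ s ∈ Icc a b, δ s ≤ (if s ≤ c then A s else C s) := by
    intro s hs
    rcases le_or_gt s c with hsc | hcs
    · simp [δ, hsc]
    rcases le_or_gt s t with hst | hts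
    · simpa [hδ_bridge s ⟨hcs.le, hst⟩, hcs.not_ge] using hCℓ s ⟨hcs.le, hs.2⟩
    · simp [hδ_right s hts, hcs.not_ge]
  refine ⟨?_, hδ_le, fun g hg hgψ s hs => ?_⟩
  · have hleft : ConvexOn ℝ (Icc a c) δ := hA.congr fun s hs => by simp [δ, hs.2]
    have hmid : ConvexOn ℝ (Icc c t) δ :=
      (convexOn_add_mul_sub y m c (convex_Icc c t)).congr fun s hs => (hδ_bridge s hs).symm
    have hright : ConvexOn ℝ (Icc t b) δ := hC.congr fun s hs => by
      rcases hs.1.eq_or_lt with rfl | hts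
      · rw [hδ_bridge t ⟨hct.le, le_rfl⟩, hCt]
      · exact (hδ_right s hts).symm
    refine (hleft.union_Icc hmid (m := m) fun s hs => ?_).union_Icc hright (m := m) fun s hs => ?_
    · simpa [δ, hAc] using hδ_supp s ⟨hs.1, hs.2.trans htb⟩
    · rw [hδ_bridge t ⟨hct.le, le_rfl⟩]
      linarith [hδ_supp s hs]
  rcases le_or_gt s c with hsc | hcs
  · simpa [δ, hsc] using hgψ s hs
  rcases le_or_gt s t with hst | hts
  · rw [hδ_bridge s ⟨hcs.le, hst⟩]
    refine hg.le_add_mul_sub_of_mem_Icc ⟨hac, hct.le.trans htb⟩ ⟨hac.trans hct.le, htb⟩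
      ⟨hcs.le, hst⟩ ?_ ?_
    · simpa [hAc] using hgψ c ⟨hac, hct.le.trans htb⟩
    · simpa [hct.not_ge, hCt] using hgψ t ⟨hac.trans hct.le, htb⟩
  · simpa [hδ_right s hts, hcs.not_ge] using hgψ s hs

theorem VaR_convex_envelope_general
    (lam c sstar : ℝ) (hlam : 0 < lam) (hc : c ∈ Set.Ioo (0:ℝ) 1)
    (v v' : ℝ → ℝ)
    (hvc : ContinuousOn v (Set.Icc 0 1))
    (hdiff : ∀ s ∈ Set.Ioo (0:ℝ) 1, HasDerivAt v (v' s) s)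
    (hconv : StrictConvexOn ℝ (Set.Ioo 0 1) v)
    (hs : sstar ∈ Set.Ioo c 1)
    (heq : lam * v' sstar * (sstar - c) = 1 + lam * (v sstar - v c)) :
    IsConvexEnvelopeOn (Set.Icc 0 1)
      (fun s => if s ≤ c then lam * v s / (1 + lam) else (1 + lam * v s) / (1 + lam))
      (fun s => if s ≤ c then lam * v s / (1 + lam)
        else if s ≤ sstar then lam * v c / (1 + lam) + lam * v' sstar / (1 + lam) * (s - c)
        else (1 + lam * v s) / (1 + lam)) := by
  have hv : ConvexOn ℝ (Icc 0 1) v := by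
    refine MonotoneOn.convexOn_of_deriv (convex_Icc 0 1) hvc ?_ ?_ <;> rw [interior_Icc]
    · exact fun s hs => (hdiff s hs).differentiableAt.differentiableWithinAt
    · exact hconv.convexOn.monotoneOn_deriv fun s hs => (hdiff s hs).differentiableAt
  have hc₀ : c ∈ Icc (0:ℝ) 1 := ⟨hc.1.le, hc.2.le⟩
  have hs₀ : sstar ∈ Icc (0:ℝ) 1 := ⟨hc.1.le.trans hs.1.le, hs.2.le⟩
  have htangent : ∀ x ∈ Icc (0:ℝ) 1, v sstar + v' sstar * (x - sstar) ≤ v x := fun x hx =>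
    hv.add_mul_sub_le_of_hasDerivAt hs₀ hx (hdiff sstar ⟨hc₀.1.trans_lt hs.1, hs.2⟩)
  have hchord : ∀ x ∈ Icc 0 c, v c + v' sstar * (x - c) ≤ v x := fun x hx =>
    hv.add_mul_sub_le_of_le_of_lt ⟨hx.1, hx.2.trans hc₀.2⟩ hs₀ hx.2 hs.1
      (by linarith [htangent c hc₀])
  have hbridge : ∀ s, lam * v c / (1 + lam) + lam * v' sstar / (1 + lam) * (s - c) =
      (1 + lam * (v sstar + v' sstar * (s - sstar))) / (1 + lam) := by
    intro s
    field_simp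
    linear_combination heq
  have hk : 0 ≤ lam / (1 + lam) := by positivity
  refine isConvexEnvelopeOn_Icc_of_tangent_bridge hc₀.1 hs.1 hs₀.2 ?_ ?_ rfl ?_ ?_ ?_
  · exact (hv.smul hk).subset (Icc_subset_Icc le_rfl hc₀.2) (convex_Icc 0 c) |>.congr
      fun s _ => by simp only [smul_eq_mul]; ring
  · exact ((hv.smul hk).add_const (1 / (1 + lam))).subset (Icc_subset_Icc hs₀.1 le_rfl)
      (convex_Icc sstar 1) |>.congr fun s _ => by simp only [Pi.add_apply, smul_eq_mul]; ring
  · intro x hx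
    calc _ = lam / (1 + lam) * (v c + v' sstar * (x - c)) := by ring
      _ ≤ lam / (1 + lam) * v x := by gcongr; exact hchord x hx
      _ = _ := by ring
  · rw [hbridge]; simp
  · intro x hx
    rw [hbridge]
    gcongr
    exact htangent x ⟨hc₀.1.trans hx.1, hx.2⟩

/-- the convex envelope of the (left-continuous) VaR distorted function
`φ⁻(s) = λ v(s)/(1+λ)` on `[0,c]`, `φ⁻(s) = (1 + λ v(s))/(1+λ)` on `(c,1]`, equals `φ⁻`
outside `(c, s*]` and the tangent line drawn from `(c, λv(c)/(1+λ))` with slope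
`λ v'(s*)/(1+λ)` on `(c, s*]`, where `s*` is the tangency point. -/
theorem VaR_convex_envelope
    (lam c sstar : ℝ) (hlam : 0 < lam) (hc : c ∈ Set.Ioo (0:ℝ) 1)
    (v v' : ℝ → ℝ)
    (hvc : ContinuousOn v (Set.Icc 0 1))
    (hvmono : StrictMonoOn v (Set.Icc 0 1))
    (hv0 : v 0 = 0) (hv1 : v 1 = 1)
    (hvmaps : Set.MapsTo v (Set.Icc 0 1) (Set.Icc 0 1))
    (hdiff : ∀ s ∈ Set.Ioo (0:ℝ) 1, HasDerivAt v (v' s) s)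
    (hv'cont : ContinuousOn v' (Set.Ioo 0 1))
    (hconv : StrictConvexOn ℝ (Set.Ioo 0 1) v)
    (hlim : Tendsto v' (nhdsWithin 1 (Set.Iio 1)) atTop)
    (hs : sstar ∈ Set.Ioo c 1)
    (heq : lam * v' sstar * (sstar - c) = 1 + lam * (v sstar - v c)) :
    IsConvexEnvelopeOn (Set.Icc 0 1)
      (fun s => if s ≤ c then lam * v s / (1 + lam) else (1 + lam * v s) / (1 + lam))
      (fun s => if s ≤ c then lam * v s / (1 + lam)
        else if s ≤ sstar then lam * v c / (1 + lam) + lam * v' sstar / (1 + lam) * (s - c)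
        else (1 + lam * v s) / (1 + lam)) :=
  VaR_convex_envelope_general lam c sstar hlam hc v v' hvc hdiff hconv hs heq
end

section
/- Let α ∈ (0,1) and x > 0. Set ξ_α = G_ξ(1 − α), X̲ = x / E[ξ · 1_{ξ ≤ ξ_α}] (equivalently X̲ = (x/E[ξ]) · 1/(1 − w(α))), and let X* = X̲ · 1_{ξ ≤ ξ_α}. Then: (i) E[ξ X*] = x; (ii) G_{X*}(α) = X̲, and for every nonnegative random variable X with E[ξ X] ≤ x one has G_X(α) ≤ X̲; consequently X* minimizes VaR_α(R) = −(1/T) ln(G_X(α)/x) over the budget set, with minimal value −(1/T) ln(X̲/x); and (iii) P(X* = 0) = α > 0, so the expected log-return of X* equals −∞. -/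
/-!
Two facts drive the result. By a Neyman–Pearson argument, the sublevel set `B = {ξ ≤ ξ_α}`,
which has mass `1 - α`, carries the least `ξ`-weight among events of mass at least `1 - α`. A
feasible `X` with `G_X(α) > y ≥ 0` exceeds `y` on such an event `A`, so
`y E[ξ 1_B] ≤ y E[ξ 1_A] ≤ E[ξ X] ≤ x`, i.e. `y ≤ X̲`; and `X* = X̲ 1_B` attains this bound
with equality in the budget. Since `ln ξ` is Gaussian, `F_ξ` is continuous and strictly
increasing on `(0, ∞)`, so `G_ξ` inverts `F_ξ` and, under Lebesgue measure on `(0, 1)`, `G_ξ`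
has the law of `ξ`; this turns `w(α)` into `E[ξ 1_{ξ > ξ_α}] / E[ξ]`. Finally
`E[ξ] = e^{-rT} ≤ 1` gives `X̲ ≥ x`, which is what makes a zero quantile (where `ln 0 = 0`)
harmless in the VaR comparison.
-/

open MeasureTheory ProbabilityTheory Set
open scoped ENNReal NNReal Classical

noncomputable section

/-- Expected log-return `E[(1/T) ln(X/x)]`, with the convention (`ln 0 = -∞`) that it is `-∞`
whenever `X = 0` with positive probability. -/
def expLogRet {Ω : Type*} [MeasurableSpace Ω] (μ : Measure Ω) (T x : ℝ) (X : Ω → ℝ) : EReal :=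
  if 0 < μ {ω | X ω = 0} then ⊥
  else expER μ (fun ω => (1 / T) * Real.log (X ω / x))

/-- The distorted identity `w(s) = (1/E[ξ]) ∫_0^s G_ξ(1-z) dz`. -/
def wDist {Ω : Type*} [MeasurableSpace Ω] (μ : Measure Ω) (ξ : Ω → ℝ) (s : ℝ) : ℝ :=
  (∫ z in (0:ℝ)..s, qf μ ξ (1 - z)) / (∫ ω, ξ ω ∂μ)

section Quantile

variable {Ω : Type*} [MeasurableSpace Ω] {μ : Measure Ω}

theorem qf_eq_of_lt_iff {Y : Ω → ℝ} {z c : ℝ}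
    (hc : ∀ y, c < y ↔ z < (μ {ω | Y ω ≤ y}).toReal) : qf μ Y z = c := by
  have hS : {y : ℝ | z < (μ {ω | Y ω ≤ y}).toReal} = Ioi c := by
    ext y; exact (hc y).symm
  rw [qf, hS, csInf_Ioi]

theorem nonneg_of_lt_measure_le {X : Ω → ℝ} (hX : ∀ᵐ ω ∂μ, 0 ≤ X ω) {z y : ℝ} (hz : 0 ≤ z)
    (hy : z < (μ {ω | X ω ≤ y}).toReal) : 0 ≤ y := by
  by_contra! hy0
  have hnull : μ {ω | X ω ≤ y} = 0 :=
    measure_mono_null (fun ω h => not_le.2 (lt_of_le_of_lt (id h : X ω ≤ y) hy0)) (ae_iff.1 hX)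
  rw [hnull, ENNReal.toReal_zero] at hy
  linarith

theorem qf_nonneg {X : Ω → ℝ} (hX : ∀ᵐ ω ∂μ, 0 ≤ X ω) {z : ℝ} (hz : 0 ≤ z) : 0 ≤ qf μ X z :=
  Real.sInf_nonneg fun _ hy => nonneg_of_lt_measure_le hX hz hy

theorem measure_le_le_of_lt_qf {X : Ω → ℝ} (hX : ∀ᵐ ω ∂μ, 0 ≤ X ω) {z y : ℝ} (hz : 0 ≤ z)
    (hy : y < qf μ X z) : (μ {ω | X ω ≤ y}).toReal ≤ z := by
  by_contra! h
  exact (csInf_le ⟨0, fun _ hy' => nonneg_of_lt_measure_le hX hz hy'⟩ h).not_gt hy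

theorem qf_indicator_const [IsProbabilityMeasure μ] {B : Set Ω} {c z : ℝ} (hc : 0 ≤ c)
    (hz : (μ Bᶜ).toReal ≤ z) (hz1 : z < 1) : qf μ (B.indicator fun _ => c) z = c := by
  have hS : {y : ℝ | z < (μ {ω | B.indicator (fun _ => c) ω ≤ y}).toReal} = Ici c := by
    ext y
    simp only [mem_ofPred_eq, mem_Ici]
    constructor
    · intro h
      by_contra! hy
      have hsub : {ω | B.indicator (fun _ => c) ω ≤ y} ⊆ Bᶜ := fun ω hω hB => by
        simp only [mem_ofPred_eq, indicator_of_mem hB] at hω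
        linarith
      linarith [ENNReal.toReal_mono (measure_ne_top μ _) (measure_mono hsub)]
    · intro hy
      have huniv : {ω | B.indicator (fun _ => c) ω ≤ y} = univ :=
        eq_univ_of_forall fun ω => (indicator_le_self' (fun _ _ => hc) ω).trans hy
      simpa [huniv] using hz1
  rw [qf, hS, csInf_Ici]

end Quantile

section Budget

variable {Ω : Type*} [MeasurableSpace Ω] {μ : Measure Ω} {ξ : Ω → ℝ}

theorem prob_compl_eq_ofReal [IsProbabilityMeasure μ] {B : Set Ω} (hB : MeasurableSet B)
    {α : ℝ} (hα0 : 0 ≤ α) (hα1 : α ≤ 1) (h : μ B = ENNReal.ofReal (1 - α)) :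
    μ Bᶜ = ENNReal.ofReal α := by
  rw [prob_compl_eq_one_sub hB, h, ENNReal.ofReal_sub _ hα0, ENNReal.ofReal_one,
    ENNReal.sub_sub_cancel ENNReal.one_ne_top (ENNReal.ofReal_le_one.2 hα1)]

theorem setIntegral_pos_of_pos (hpos : ∀ ω, 0 < ξ ω) (hξ : Integrable ξ μ) {B : Set Ω}
    (hB : 0 < μ B) : 0 < ∫ ω in B, ξ ω ∂μ := by
  rwa [setIntegral_pos_iff_support_of_nonneg_ae (ae_of_all _ fun ω => (hpos ω).le)
    hξ.integrableOn, Function.support_eq_univ fun ω => (hpos ω).ne', univ_inter]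

theorem lintegral_ofReal_mul_indicator_const (hξ0 : ∀ ω, 0 ≤ ξ ω) (hξ : Integrable ξ μ)
    {B : Set Ω} (hB : MeasurableSet B) {c : ℝ} (hc : 0 ≤ c) :
    ∫⁻ ω, ENNReal.ofReal (ξ ω * B.indicator (fun _ => c) ω) ∂μ
      = ENNReal.ofReal (c * ∫ ω in B, ξ ω ∂μ) := by
  have hpt : (fun ω => ENNReal.ofReal (ξ ω * B.indicator (fun _ => c) ω))
      = B.indicator fun ω => ENNReal.ofReal (c * ξ ω) := by
    ext ω
    by_cases hω : ω ∈ B <;> simp [hω, mul_comm]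
  rw [hpt, lintegral_indicator hB, ← integral_const_mul,
    ofReal_integral_eq_lintegral_ofReal (hξ.const_mul c).integrableOn
      (ae_of_all _ fun ω => mul_nonneg hc (hξ0 ω))]

/-- Neyman–Pearson: `ξ ≤ k` on `{ξ ≤ k} \ A`, while `ξ > k` on the set `A \ {ξ ≤ k}`, which is
at least as large. -/
theorem setIntegral_sublevel_le [IsFiniteMeasure μ] (hξm : Measurable ξ) (hξ : Integrable ξ μ)
    {k : ℝ} (hk : 0 ≤ k) {A : Set Ω} (hA : MeasurableSet A)
    (hμ : μ {ω | ξ ω ≤ k} ≤ μ A) :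
    ∫ ω in {ω | ξ ω ≤ k}, ξ ω ∂μ ≤ ∫ ω in A, ξ ω ∂μ := by
  set B := {ω | ξ ω ≤ k}
  have hB : MeasurableSet B := hξm measurableSet_Iic
  have hBA : ∫ ω in B \ A, ξ ω ∂μ ≤ k * μ.real (B \ A) := by
    simpa [mul_comm] using setIntegral_mono_on hξ.integrableOn (integrableOn_const (C := k))
      (hB.diff hA) fun ω hω => (hω.1 : ξ ω ≤ k)
  have hAB : k * μ.real (A \ B) ≤ ∫ ω in A \ B, ξ ω ∂μ := by
    simpa [mul_comm] using setIntegral_mono_on (integrableOn_const (C := k)) hξ.integrableOn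
      (hA.diff hB) fun ω hω => (not_le.1 (hω.2 : ¬ ξ ω ≤ k)).le
  have hmass : μ.real (B \ A) ≤ μ.real (A \ B) := by
    have hBA' := measureReal_inter_add_sdiff (μ := μ) (s := B) hA
    have hAB' := measureReal_inter_add_sdiff (μ := μ) (s := A) hB
    have hle : μ.real B ≤ μ.real A := ENNReal.toReal_mono (measure_ne_top μ A) hμ
    rw [inter_comm] at hBA'
    linarith
  have hsplitB := integral_inter_add_sdiff hA (hξ.integrableOn (s := B))
  have hsplitA := integral_inter_add_sdiff hB (hξ.integrableOn (s := A))
  rw [inter_comm] at hsplitB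
  nlinarith [mul_le_mul_of_nonneg_left hmass hk]

theorem qf_le_div_of_lintegral_le [IsProbabilityMeasure μ] (hξm : Measurable ξ)
    (hξ0 : ∀ ω, 0 ≤ ξ ω) (hξ : Integrable ξ μ) {k α x : ℝ} (hk : 0 ≤ k) (hα : 0 ≤ α)
    (hx : 0 ≤ x) (hB : μ {ω | ξ ω ≤ k} ≤ ENNReal.ofReal (1 - α))
    (hI : 0 < ∫ ω in {ω | ξ ω ≤ k}, ξ ω ∂μ) {X : Ω → ℝ} (hXm : Measurable X)
    (hX0 : ∀ᵐ ω ∂μ, 0 ≤ X ω) (hbud : ∫⁻ ω, ENNReal.ofReal (ξ ω * X ω) ∂μ ≤ ENNReal.ofReal x) :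
    qf μ X α ≤ x / ∫ ω in {ω | ξ ω ≤ k}, ξ ω ∂μ := by
  set I := ∫ ω in {ω | ξ ω ≤ k}, ξ ω ∂μ
  by_contra! hlt
  obtain ⟨y, hxy, hyq⟩ := exists_between hlt
  have hy0 : 0 ≤ y := (div_nonneg hx hI.le).trans hxy.le
  set A := {ω | X ω ≤ y}ᶜ
  have hA : MeasurableSet A := (hXm measurableSet_Iic).compl
  have hμA : μ {ω | ξ ω ≤ k} ≤ μ A := by
    have hle : μ {ω | X ω ≤ y} ≤ ENNReal.ofReal α := by
      rw [← ENNReal.ofReal_toReal (measure_ne_top μ _)]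
      exact ENNReal.ofReal_le_ofReal (measure_le_le_of_lt_qf hX0 hα hyq)
    calc μ {ω | ξ ω ≤ k} ≤ ENNReal.ofReal (1 - α) := hB
      _ = 1 - ENNReal.ofReal α := by rw [ENNReal.ofReal_sub _ hα, ENNReal.ofReal_one]
      _ ≤ 1 - μ {ω | X ω ≤ y} := tsub_le_tsub_left hle 1
      _ = μ A := (prob_compl_eq_one_sub (hXm measurableSet_Iic)).symm
  -- `y 1_A ≤ X`, so `y 1_A` also satisfies the budget constraint
  have hbudA : ENNReal.ofReal (y * ∫ ω in A, ξ ω ∂μ) ≤ ENNReal.ofReal x := by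
    rw [← lintegral_ofReal_mul_indicator_const hξ0 hξ hA hy0]
    refine (lintegral_mono_ae ?_).trans hbud
    filter_upwards [hX0] with ω hω
    refine ENNReal.ofReal_le_ofReal (mul_le_mul_of_nonneg_left ?_ (hξ0 ω))
    by_cases hωy : X ω ≤ y
    · simpa [A, hωy] using hω
    · simpa [A, hωy] using (not_le.1 hωy).le
  have hyA : y * I ≤ x :=
    (mul_le_mul_of_nonneg_left (setIntegral_sublevel_le hξm hξ hk hA hμA) hy0).trans
      ((ENNReal.ofReal_le_ofReal_iff hx).1 hbudA)
  exact (div_lt_iff₀ hI).1 hxy |>.not_ge hyA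

end Budget

section QuantileTransform

variable {Ω : Type*} [MeasurableSpace Ω] {μ : Measure Ω} {ξ : Ω → ℝ}

theorem volume_Iic_inter_Ioo_zero_one {a : ℝ} (ha1 : a ≤ 1) :
    volume (Iic a ∩ Ioo (0:ℝ) 1) = ENNReal.ofReal a := by
  apply le_antisymm
  · calc volume (Iic a ∩ Ioo (0:ℝ) 1) ≤ volume (Icc 0 a) :=
          measure_mono fun u hu => ⟨hu.2.1.le, hu.1⟩
      _ = ENNReal.ofReal a := by rw [Real.volume_Icc, sub_zero]
  · calc ENNReal.ofReal a = volume (Ioo 0 a) := by rw [Real.volume_Ioo, sub_zero]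
      _ ≤ volume (Iic a ∩ Ioo (0:ℝ) 1) :=
          measure_mono fun u hu => ⟨hu.2.le, hu.1, hu.2.trans_le ha1⟩

variable (hq : ∀ u ∈ Ioo (0:ℝ) 1, ∀ y, qf μ ξ u ≤ y ↔ u ≤ (μ {ω | ξ ω ≤ y}).toReal)
include hq

theorem monotoneOn_qf_s12 : MonotoneOn (qf μ ξ) (Ioo 0 1) := fun u hu u' hu' huu' =>
  (hq u hu _).2 (huu'.trans ((hq u' hu' _).1 le_rfl))

theorem map_restrict_Ioo_qf [IsProbabilityMeasure μ] (hξm : Measurable ξ) :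
    (volume.restrict (Ioo (0:ℝ) 1)).map (qf μ ξ) = μ.map ξ := by
  have hG : AEMeasurable (qf μ ξ) (volume.restrict (Ioo (0:ℝ) 1)) :=
    aemeasurable_restrict_of_monotoneOn measurableSet_Ioo (monotoneOn_qf_s12 hq)
  have : IsFiniteMeasure (volume.restrict (Ioo (0:ℝ) 1)) :=
    isFiniteMeasure_restrict.2 measure_Ioo_lt_top.ne
  refine Measure.ext_of_Iic _ _ fun y => ?_
  have hpre : qf μ ξ ⁻¹' Iic y ∩ Ioo 0 1 = Iic (μ {ω | ξ ω ≤ y}).toReal ∩ Ioo 0 1 := by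
    ext u
    simp only [mem_inter_iff, mem_preimage, mem_Iic]
    exact and_congr_left fun hu => hq u hu y
  rw [Measure.map_apply_of_aemeasurable hG measurableSet_Iic,
    Measure.restrict_apply' measurableSet_Ioo, hpre,
    volume_Iic_inter_Ioo_zero_one
      (ENNReal.toReal_le_of_le_ofReal zero_le_one (by simpa using prob_le_one)),
    ENNReal.ofReal_toReal (measure_ne_top μ _), Measure.map_apply hξm measurableSet_Iic]
  rfl

theorem intervalIntegral_qf_eq_setIntegral [IsProbabilityMeasure μ] (hξm : Measurable ξ)
    {a : ℝ} (ha : a ∈ Ioo (0:ℝ) 1) (hFa : (μ {ω | ξ ω ≤ qf μ ξ a}).toReal = a) :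
    ∫ u in a..1, qf μ ξ u = ∫ ω in {ω | qf μ ξ a < ξ ω}, ξ ω ∂μ := by
  have hG : AEMeasurable (qf μ ξ) (volume.restrict (Ioo (0:ℝ) 1)) :=
    aemeasurable_restrict_of_monotoneOn measurableSet_Ioo (monotoneOn_qf_s12 hq)
  have hg : Measurable ((Ioi (qf μ ξ a)).indicator (id : ℝ → ℝ)) :=
    measurable_id.indicator measurableSet_Ioi
  have hIoo : Ioo (0:ℝ) 1 ∩ Ioi a = Ioo a 1 := by
    ext u
    simp only [mem_inter_iff, mem_Ioo, mem_Ioi]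
    constructor
    · rintro ⟨⟨-, hu1⟩, hau⟩; exact ⟨hau, hu1⟩
    · rintro ⟨hau, hu1⟩; exact ⟨⟨ha.1.trans hau, hu1⟩, hau⟩
  have hpt : ∀ u ∈ Ioo (0:ℝ) 1,
      (Ioi a).indicator (qf μ ξ) u = (Ioi (qf μ ξ a)).indicator id (qf μ ξ u) := by
    intro u hu
    have hlt : qf μ ξ a < qf μ ξ u ↔ a < u := by
      rw [← not_le, ← not_le, hq u hu, hFa]
    by_cases hau : a < u <;> simp [hau, hlt]
  calc ∫ u in a..1, qf μ ξ u = ∫ u in Ioo a 1, qf μ ξ u := by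
        rw [intervalIntegral.integral_of_le ha.2.le, integral_Ioc_eq_integral_Ioo]
    _ = ∫ u in Ioo 0 1, (Ioi a).indicator (qf μ ξ) u := by
        rw [setIntegral_indicator measurableSet_Ioi, hIoo]
    _ = ∫ u in Ioo 0 1, (Ioi (qf μ ξ a)).indicator id (qf μ ξ u) :=
        setIntegral_congr_fun measurableSet_Ioo hpt
    _ = ∫ t, (Ioi (qf μ ξ a)).indicator id t ∂(μ.map ξ) := by
        rw [← map_restrict_Ioo_qf hq hξm, integral_map hG hg.aestronglyMeasurable]
    _ = ∫ ω in {ω | qf μ ξ a < ξ ω}, ξ ω ∂μ := by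
        rw [integral_map hξm.aemeasurable hg.aestronglyMeasurable]
        exact integral_indicator (hξm measurableSet_Ioi)

theorem one_sub_wDist [IsProbabilityMeasure μ] (hξm : Measurable ξ) (hξ : Integrable ξ μ)
    {α : ℝ} (hα : α ∈ Ioo (0:ℝ) 1) (hF : (μ {ω | ξ ω ≤ qf μ ξ (1 - α)}).toReal = 1 - α)
    (hE : ∫ ω, ξ ω ∂μ ≠ 0) :
    1 - wDist μ ξ α = (∫ ω in {ω | ξ ω ≤ qf μ ξ (1 - α)}, ξ ω ∂μ) / ∫ ω, ξ ω ∂μ := by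
  have h1α : 1 - α ∈ Ioo (0:ℝ) 1 := ⟨by linarith [hα.2], by linarith [hα.1]⟩
  have hcompl : {ω | ξ ω ≤ qf μ ξ (1 - α)}ᶜ = {ω | qf μ ξ (1 - α) < ξ ω} := by
    ext ω
    simp
  have hint : ∫ z in (0:ℝ)..α, qf μ ξ (1 - z)
      = ∫ ω, ξ ω ∂μ - ∫ ω in {ω | ξ ω ≤ qf μ ξ (1 - α)}, ξ ω ∂μ := by
    rw [intervalIntegral.integral_comp_sub_left (fun u => qf μ ξ u), sub_zero,
      intervalIntegral_qf_eq_setIntegral hq hξm h1α hF, ← hcompl]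
    linarith [integral_add_compl (s := {ω | ξ ω ≤ qf μ ξ (1 - α)}) (hξm measurableSet_Iic) hξ]
  rw [wDist, hint]
  field_simp
  ring

end QuantileTransform

section Lognormal

theorem continuous_cdf_gaussianReal (m : ℝ) {v : ℝ≥0} (hv : v ≠ 0) :
    Continuous (cdf (gaussianReal m v)) := by
  have := nullSingletonClass_gaussianReal (μ := m) hv
  have hprim : (fun b => ∫ _ in Iic b, (1:ℝ) ∂gaussianReal m v) = cdf (gaussianReal m v) := by
    ext b
    simp [cdf_eq_real]
  refine continuous_iff_continuousAt.2 fun t => ?_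
  rw [← hprim]
  exact (integrableOn_const (μ := gaussianReal m v) (s := Iic (t + 1)) (C := (1:ℝ))
    |>.continuousOn_Iic_primitive_Iic).continuousAt (Iic_mem_nhds (lt_add_one t))

theorem strictMono_cdf_gaussianReal (m : ℝ) {v : ℝ≥0} (hv : v ≠ 0) :
    StrictMono (cdf (gaussianReal m v)) := by
  intro a b hab
  have hpos : gaussianReal m v (Ioc a b) ≠ 0 := fun h =>
    hab.not_ge (by simpa [Real.volume_Ioc] using gaussianReal_absolutelyContinuous' m hv h)
  have hIoc := (cdf (gaussianReal m v)).measure_Ioc a b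
  rw [measure_cdf] at hIoc
  rw [hIoc, Ne, ENNReal.ofReal_eq_zero, not_le] at hpos
  linarith

theorem exists_cdf_eq {ν : Measure ℝ} (hν : Continuous (cdf ν)) {u : ℝ}
    (hu : u ∈ Ioo (0:ℝ) 1) : ∃ t, cdf ν t = u :=
  mem_range_of_exists_le_of_exists_ge hν
    ((tendsto_cdf_atBot ν).eventually (eventually_le_nhds hu.1)).exists
    ((tendsto_cdf_atTop ν).eventually (eventually_ge_nhds hu.2)).exists

variable {Ω : Type*} [MeasurableSpace Ω] {μ : Measure Ω} {ξ : Ω → ℝ}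

theorem integral_eq_exp_of_map_log_eq_gaussianReal (hpos : ∀ ω, 0 < ξ ω) {m : ℝ} {v : ℝ≥0}
    (hlog : μ.map (fun ω => Real.log (ξ ω)) = gaussianReal m v) :
    ∫ ω, ξ ω ∂μ = Real.exp (m + v / 2) := by
  simpa [mgf, Real.exp_log (hpos _)] using mgf_gaussianReal hlog 1

variable {ν : Measure ℝ} [IsProbabilityMeasure ν]

theorem measure_le_eq_cdf_log (hξm : Measurable ξ) (hpos : ∀ ω, 0 < ξ ω)
    (hlog : μ.map (fun ω => Real.log (ξ ω)) = ν) {y : ℝ} (hy : 0 < y) :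
    (μ {ω | ξ ω ≤ y}).toReal = cdf ν (Real.log y) := by
  have hset : {ω | ξ ω ≤ y} = (fun ω => Real.log (ξ ω)) ⁻¹' Iic (Real.log y) := by
    ext ω
    simp [Real.log_le_log_iff (hpos ω) hy]
  rw [hset, ← Measure.map_apply hξm.log measurableSet_Iic, hlog, cdf_eq_real]
  rfl

theorem qf_spec_of_map_log (hξm : Measurable ξ) (hpos : ∀ ω, 0 < ξ ω)
    (hlog : μ.map (fun ω => Real.log (ξ ω)) = ν) (hcont : Continuous (cdf ν))
    (hmono : StrictMono (cdf ν)) {u : ℝ} (hu : u ∈ Ioo (0:ℝ) 1) :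
    0 < qf μ ξ u ∧ (μ {ω | ξ ω ≤ qf μ ξ u}).toReal = u ∧
      ∀ y, qf μ ξ u ≤ y ↔ u ≤ (μ {ω | ξ ω ≤ y}).toReal := by
  obtain ⟨t, ht⟩ := exists_cdf_eq hcont hu
  have hF := fun y (hy : 0 < y) => measure_le_eq_cdf_log hξm hpos hlog hy
  have hF0 : ∀ y ≤ 0, (μ {ω | ξ ω ≤ y}).toReal = 0 := fun y hy => by
    have hempty : {ω | ξ ω ≤ y} = ∅ :=
      eq_empty_of_forall_notMem fun ω h => (hpos ω).not_ge (le_trans h hy)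
    simp [hempty]
  have hle : ∀ y, Real.exp t ≤ y ↔ u ≤ (μ {ω | ξ ω ≤ y}).toReal := by
    intro y
    rcases le_or_gt y 0 with hy | hy
    · rw [hF0 y hy]
      exact iff_of_false (by linarith [Real.exp_pos t]) (by linarith [hu.1])
    · rw [hF y hy, ← ht, hmono.le_iff_le, Real.le_log_iff_exp_le hy]
  have hlt : ∀ y, Real.exp t < y ↔ u < (μ {ω | ξ ω ≤ y}).toReal := by
    intro y
    rcases le_or_gt y 0 with hy | hy
    · rw [hF0 y hy]
      exact iff_of_false (by linarith [Real.exp_pos t]) (by linarith [hu.1])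
    · rw [hF y hy, ← ht, hmono.lt_iff_lt, Real.lt_log_iff_exp_lt hy]
  rw [qf_eq_of_lt_iff hlt]
  exact ⟨Real.exp_pos t, by rw [hF _ (Real.exp_pos t), Real.log_exp, ht], hle⟩

end Lognormal

theorem Real.log_div_le_log_div {q X x : ℝ} (hq : 0 ≤ q) (hqX : q ≤ X) (hx : 0 < x)
    (hxX : x ≤ X) : Real.log (q / x) ≤ Real.log (X / x) := by
  rcases hq.eq_or_lt with rfl | hq
  · simpa using Real.log_nonneg ((one_le_div hx).2 hxX)
  · exact Real.log_le_log (div_pos hq hx) (div_le_div_of_nonneg_right hqX hx.le)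

/-- the min-VaR portfolio. With `ξ_α = G_ξ(1−α)`,
`X̲ = x / E[ξ 1_{ξ ≤ ξ_α}]` and `X* = X̲ 1_{ξ ≤ ξ_α}`: (i) the budget binds and
`X̲ = (x/E[ξ])/(1 − w(α))`; (ii) `G_{X*}(α) = X̲` and every feasible `X` has
`G_X(α) ≤ X̲`, so `X*` minimizes `VaR_α` of the log-return, with minimal value
`−(1/T) ln(X̲/x)`; (iii) `P(X* = 0) = α > 0`, so `E[R*] = −∞`. -/
theorem min_VaR_portfolio
    {Ω : Type*} [MeasurableSpace Ω] (μ : Measure Ω) [IsProbabilityMeasure μ]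
    (ξ : Ω → ℝ) (hξm : Measurable ξ) (hξpos : ∀ ω, 0 < ξ ω) (hξint : Integrable ξ μ)
    (T r θ : ℝ) (hT : 0 < T) (hr : 0 < r) (hθ : 0 < θ)
    (hlog : μ.map (fun ω => Real.log (ξ ω))
      = gaussianReal (-(r + θ ^ 2 / 2) * T) ((θ ^ 2 * T).toNNReal))
    (α x : ℝ) (hα : α ∈ Set.Ioo (0:ℝ) 1) (hx : 0 < x)
    (ξα Xlow : ℝ) (Xstar : Ω → ℝ)
    (hξα : ξα = qf μ ξ (1 - α))
    (hXlow : Xlow = x / ∫ ω in {ω | ξ ω ≤ ξα}, ξ ω ∂μ)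
    (hXstar : ∀ ω, Xstar ω = if ξ ω ≤ ξα then Xlow else 0) :
    -- (i) the budget constraint binds, and the equivalent expression for X̲
    (∫⁻ ω, ENNReal.ofReal (ξ ω * Xstar ω) ∂μ = ENNReal.ofReal x) ∧
    (Xlow = x / (∫ ω, ξ ω ∂μ) * (1 / (1 - wDist μ ξ α))) ∧
    -- (ii) quantile of the optimum and optimality of X* for VaR
    (qf μ Xstar α = Xlow) ∧
    (∀ X : Ω → ℝ, Measurable X → (∀ᵐ ω ∂μ, 0 ≤ X ω) →
      ∫⁻ ω, ENNReal.ofReal (ξ ω * X ω) ∂μ ≤ ENNReal.ofReal x →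
      qf μ X α ≤ Xlow) ∧
    (∀ X : Ω → ℝ, Measurable X → (∀ᵐ ω ∂μ, 0 ≤ X ω) →
      ∫⁻ ω, ENNReal.ofReal (ξ ω * X ω) ∂μ ≤ ENNReal.ofReal x →
      -((1 / T) * Real.log (Xlow / x)) ≤ -((1 / T) * Real.log (qf μ X α / x))) ∧
    (-((1 / T) * Real.log (qf μ Xstar α / x)) = -((1 / T) * Real.log (Xlow / x))) ∧
    -- (iii) P(X* = 0) = α and the expected log-return is -∞
    (μ {ω | Xstar ω = 0} = ENNReal.ofReal α) ∧
    (expLogRet μ T x Xstar = ⊥) := by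
  obtain ⟨hα0, hα1⟩ := hα
  have hv : (θ ^ 2 * T).toNNReal ≠ 0 := (Real.toNNReal_pos.2 (by positivity)).ne'
  have hspec := fun u (hu : u ∈ Ioo (0:ℝ) 1) => qf_spec_of_map_log hξm hξpos hlog
    (continuous_cdf_gaussianReal _ hv) (strictMono_cdf_gaussianReal _ hv) hu
  obtain ⟨hξα0, hFξα, -⟩ := hspec (1 - α) ⟨by linarith, by linarith⟩
  rw [← hξα] at hξα0 hFξα
  set B := {ω | ξ ω ≤ ξα}
  have hB : MeasurableSet B := hξm measurableSet_Iic
  have hμB : μ B = ENNReal.ofReal (1 - α) := by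
    rw [← hFξα, ENNReal.ofReal_toReal (measure_ne_top _ _)]
  have hμBc : μ Bᶜ = ENNReal.ofReal α := prob_compl_eq_ofReal hB hα0.le hα1.le hμB
  set I := ∫ ω in B, ξ ω ∂μ
  have hI : 0 < I :=
    setIntegral_pos_of_pos hξpos hξint (by rw [hμB, ENNReal.ofReal_pos]; linarith)
  have hE : ∫ ω, ξ ω ∂μ = Real.exp (-r * T) := by
    rw [integral_eq_exp_of_map_log_eq_gaussianReal hξpos hlog, Real.coe_toNNReal _ (by positivity)]
    ring_nf
  have hxXlow : x ≤ Xlow := by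
    have hIE : I ≤ Real.exp (-r * T) :=
      hE ▸ setIntegral_le_integral hξint (ae_of_all _ fun ω => (hξpos ω).le)
    rw [hXlow, le_div_iff₀ hI]
    nlinarith [Real.exp_le_one_iff.2 (by nlinarith : -r * T ≤ 0)]
  have hXlow0 : 0 < Xlow := hx.trans_le hxXlow
  obtain rfl : Xstar = B.indicator fun _ => Xlow := funext fun ω => by
    by_cases h : ξ ω ≤ ξα <;> simp [hXstar, B, h]
  have hzero : {ω | B.indicator (fun _ => Xlow) ω = 0} = Bᶜ := by
    ext ω
    simp [indicator_apply_eq_zero, hXlow0.ne']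
  have hqstar := qf_indicator_const hXlow0.le (by rw [hμBc, ENNReal.toReal_ofReal hα0.le]) hα1
  have hopt : ∀ X : Ω → ℝ, Measurable X → (∀ᵐ ω ∂μ, 0 ≤ X ω) →
      ∫⁻ ω, ENNReal.ofReal (ξ ω * X ω) ∂μ ≤ ENNReal.ofReal x → qf μ X α ≤ Xlow :=
    fun X hXm hX0 hbud => hXlow ▸ qf_le_div_of_lintegral_le hξm (fun ω => (hξpos ω).le) hξint
      hξα0.le hα0.le hx.le hμB.le hI hXm hX0 hbud
  refine ⟨?_, ?_, hqstar, hopt, fun X hXm hX0 hbud => ?_, by rw [hqstar], by rw [hzero, hμBc],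
    ?_⟩
  · rw [lintegral_ofReal_mul_indicator_const (fun ω => (hξpos ω).le) hξint hB hXlow0.le, hXlow,
      div_mul_cancel₀ _ hI.ne']
  · have hw : 1 - wDist μ ξ α = I / ∫ ω, ξ ω ∂μ := by
      rw [one_sub_wDist (fun u hu => (hspec u hu).2.2) hξm hξint ⟨hα0, hα1⟩ (hξα ▸ hFξα)
        (hE ▸ (Real.exp_pos _).ne'), ← hξα]
    rw [hw, hXlow, hE]
    field_simp
  · exact neg_le_neg (mul_le_mul_of_nonneg_left (Real.log_div_le_log_div
      (qf_nonneg hX0 hα0.le) (hopt X hXm hX0 hbud) hx hxXlow) (by positivity))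
  · rw [expLogRet, if_pos (by rw [hzero, hμBc]; exact ENNReal.ofReal_pos.2 hα0)]

end
end
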